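/- If two parallel 2-faces x and y of a cubical complex Q ⊆ Q^n_2 are 'related' — meaning the unique 3-cube containing them has its other four boundary 4-cycles all filled by 2-faces of Q — then the boundary 4-cycles of x and y are homotopic (edge-equivalent) in Q. -/

import Mathlib

open Finset SimpleGraph

/-- The 1-skeleton of the `n`-dimensional cube. -/
def cubeGraph (n : ℕ) : SimpleGraph (Fin n → Bool) where
  Adj u v := (Finset.univ.filter fun i => u i ≠ v i).card = 1
  symm := by
    constructor
    intro u v h
    rw [show (Finset.univ.filter fun i => v i ≠ u i)
        = (Finset.univ.filter fun i => u i ≠ v i) from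
      Finset.filter_congr fun i _ => ne_comm]
    exact h
  loopless := by
    constructor
    intro u h
    simp at h

/-- A 2-face of the `n`-cube in star notation. -/
abbrev TwoFace (n : ℕ) :=
  {x : Fin n → Option Bool // (Finset.univ.filter fun i => x i = none).card = 2}

/-- A 3-face of the `n`-cube in star notation. -/
abbrev ThreeFace (n : ℕ) :=
  {x : Fin n → Option Bool // (Finset.univ.filter fun i => x i = none).card = 3}

/-- A vertex `v` lies on the face `x` (star notation): `v` agrees with every fixed
coordinate of `x`. -/
def inFace {n : ℕ} (x : Fin n → Option Bool) (v : Fin n → Bool) : Prop :=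
  ∀ i b, x i = some b → v i = b

/-- `x` is a subface of `c` (star notation). -/
def subFace {n : ℕ} (x c : Fin n → Option Bool) : Prop :=
  (∀ i, x i = none → c i = none) ∧ ∀ i b, c i = some b → x i = some b

/-- Edge-equivalence (combinatorial homotopy) of edge-paths in a cubical complex with
1-skeleton `G` and set of filled 2-faces `F`: the equivalence relation on walks generated
by (i) replacing a segment lying in a filled square by another segment in that square with
the same endpoints (this subsumes the moves replacing two consecutive edges of a filled
4-cycle by the opposite two, one edge by the complementary three, or three by one), and
(ii) cancelling an edge traversed twice consecutively. -/
inductive EdgeEquiv {n : ℕ} (G : SimpleGraph (Fin n → Bool)) (F : TwoFace n → Prop) :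
    ∀ {u v : Fin n → Bool}, G.Walk u v → G.Walk u v → Prop
  | refl {u v} (w : G.Walk u v) : EdgeEquiv G F w w
  | symm {u v} {w₁ w₂ : G.Walk u v} : EdgeEquiv G F w₁ w₂ → EdgeEquiv G F w₂ w₁
  | trans {u v} {w₁ w₂ w₃ : G.Walk u v} :
      EdgeEquiv G F w₁ w₂ → EdgeEquiv G F w₂ w₃ → EdgeEquiv G F w₁ w₃
  | square {a b u v : Fin n → Bool} (x : TwoFace n) (hx : F x)
      (w₁ w₂ : G.Walk a b)
      (h₁ : ∀ z ∈ w₁.support, inFace x.1 z) (h₂ : ∀ z ∈ w₂.support, inFace x.1 z)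
      (p : G.Walk u a) (q : G.Walk b v) :
      EdgeEquiv G F (p.append (w₁.append q)) (p.append (w₂.append q))
  | backtrack {a b u v : Fin n → Bool} (h : G.Adj a b) (p : G.Walk u a) (q : G.Walk a v) :
      EdgeEquiv G F
        (p.append ((Walk.cons h (Walk.cons h.symm Walk.nil)).append q)) (p.append q)

/-!
Let `k` be the coordinate in which `x` and `y` differ, and let `φ` switch coordinate `k`: a cube
automorphism carrying the face `x` onto `y`. For every edge `uv` of `∂x`, the vertices
`u, v, φ u, φ v` span a 2-face of the 3-cube `c` that is free in direction `k`, hence is neither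
`x` nor `y` and so is filled. Sliding `∂x` across these side squares turns it into
`φ(∂x) = ∂y` conjugated by the edge `a — φ a`.
-/

theorem card_filter_ne_eq_one_iff {ι α : Type*} [Fintype ι] [DecidableEq α] {f g : ι → α} :
    (univ.filter fun i => f i ≠ g i).card = 1 ↔ ∃ k, f k ≠ g k ∧ ∀ j, j ≠ k → f j = g j := by
  rw [card_eq_one]
  refine exists_congr fun k => ⟨fun h => ?_, fun ⟨hk, hj⟩ => ?_⟩
  · have hmem : ∀ j, f j ≠ g j ↔ j = k := by simpa [Finset.ext_iff] using h
    exact ⟨(hmem k).2 rfl, fun j hjk => not_not.1 fun hne => hjk ((hmem j).1 hne)⟩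
  · ext j
    simp only [mem_filter, mem_univ, true_and, mem_singleton]
    exact ⟨fun hne => not_not.1 fun hjk => hne (hj j hjk), fun hjk => hjk ▸ hk⟩

theorem cubeGraph_adj_iff {n : ℕ} {u v : Fin n → Bool} :
    (cubeGraph n).Adj u v ↔ ∃ e, u e ≠ v e ∧ ∀ j, j ≠ e → u j = v j :=
  card_filter_ne_eq_one_iff

theorem Option.exists_eq_some_not_of_ne {o o' : Option Bool} (h : o ≠ o')
    (hnone : o = none ↔ o' = none) : ∃ b, o = some b ∧ o' = some !b := by
  rcases o with _ | _ | _ <;> rcases o' with _ | _ | _ <;> simp_all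

theorem eq_none_of_subFace_of_ne {n : ℕ} {x y c : Fin n → Option Bool} {k : Fin n}
    (hxc : subFace x c) (hyc : subFace y c) (hxy : x k ≠ y k) : c k = none := by
  cases hc : c k with
  | none => rfl
  | some b => exact absurd ((hxc.2 k b hc).trans (hyc.2 k b hc).symm) hxy

theorem inFace_of_subFace {n : ℕ} {x c : Fin n → Option Bool} {v : Fin n → Bool}
    (hxc : subFace x c) (hv : inFace x v) : inFace c v :=
  fun i b hi => hv i b (hxc.2 i b hi)

def flipAt {n : ℕ} (k : Fin n) (v : Fin n → Bool) : Fin n → Bool :=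
  Function.update v k (!v k)

section flipAt

variable {n : ℕ} (k : Fin n)

theorem flipAt_apply (v : Fin n → Bool) (j : Fin n) :
    flipAt k v j = if j = k then !v k else v j :=
  Function.update_apply v k (!v k) j

theorem flipAt_involutive : Function.Involutive (flipAt k) := by
  intro v
  funext j
  by_cases h : j = k <;> simp [flipAt_apply, h]

theorem cubeGraph_adj_flipAt (v : Fin n → Bool) : (cubeGraph n).Adj v (flipAt k v) :=
  cubeGraph_adj_iff.2 ⟨k, by simp [flipAt_apply], fun j hj => by simp [flipAt_apply, hj]⟩

def flipHom : cubeGraph n →g cubeGraph n where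
  toFun := flipAt k
  map_rel' {u v} h := by
    have hne : ∀ i, flipAt k u i ≠ flipAt k v i ↔ u i ≠ v i := fun i => by
      by_cases hi : i = k <;> simp [flipAt_apply, hi]
    obtain ⟨e, he, hj⟩ := cubeGraph_adj_iff.1 h
    exact cubeGraph_adj_iff.2
      ⟨e, (hne e).2 he, fun j hje => not_not.1 fun h' => (hne j).1 h' (hj j hje)⟩

theorem inFace_flipAt {x y : Fin n → Option Bool} {b : Bool} (hxk : x k = some b)
    (hyk : y k = some !b) (hxy : ∀ j, j ≠ k → x j = y j) {v : Fin n → Bool}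
    (hv : inFace x v) : inFace y (flipAt k v) := by
  intro j b' hj
  rw [flipAt_apply]
  split_ifs with hjk
  · subst hjk
    rw [hv j b hxk]
    exact Option.some.inj (hyk.symm.trans hj)
  · exact hv j b' ((hxy j hjk).trans hj)

end flipAt

section faces

variable {n : ℕ}

def sideFace (k e : Fin n) (u : Fin n → Bool) : Fin n → Option Bool :=
  fun j => if j = k ∨ j = e then none else some (u j)

theorem card_sideFace {k e : Fin n} (hke : k ≠ e) (u : Fin n → Bool) :
    (univ.filter fun j => sideFace k e u j = none).card = 2 := by
  have : (univ.filter fun j => sideFace k e u j = none) = {k, e} := by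
    ext j
    by_cases hj : j = k ∨ j = e <;> simp [sideFace, hj] <;> tauto
  rw [this, card_pair hke]

theorem inFace_sideFace_iff {k e : Fin n} {u v : Fin n → Bool} :
    inFace (sideFace k e u) v ↔ ∀ j, j ≠ k → j ≠ e → v j = u j := by
  refine ⟨fun hv j hjk hje => hv j (u j) (by simp [sideFace, hjk, hje]), fun hv j b hj => ?_⟩
  by_cases hjke : j = k ∨ j = e
  · simp [sideFace, hjke] at hj
  · simp only [sideFace, if_neg hjke, Option.some.injEq] at hj
    rw [hv j (not_or.1 hjke).1 (not_or.1 hjke).2, hj]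

theorem subFace_sideFace {c : Fin n → Option Bool} {k e : Fin n} {u : Fin n → Bool}
    (hck : c k = none) (hce : c e = none) (hu : inFace c u) : subFace (sideFace k e u) c := by
  refine ⟨fun j hj => ?_, fun j b hj => ?_⟩
  · by_cases hjke : j = k ∨ j = e
    · rcases hjke with rfl | rfl <;> assumption
    · simp [sideFace, hjke] at hj
  · have hjke : ¬(j = k ∨ j = e) := by rintro (rfl | rfl) <;> simp_all
    simp [sideFace, hjke, hu j b hj]

def SpansFilledFace (F : TwoFace n → Prop) (s : List (Fin n → Bool)) : Prop :=
  ∃ z : TwoFace n, F z ∧ ∀ v ∈ s, inFace z.1 v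

/-- The witness is `sideFace k e u`, where `e` is the direction of the edge `uv`. -/
theorem spansFilledFace_flipAt {F : TwoFace n → Prop} {x c : Fin n → Option Bool} {k : Fin n}
    {b : Bool} (hxk : x k = some b) (hxc : subFace x c) (hck : c k = none)
    (hF : ∀ z : TwoFace n, subFace z.1 c → z.1 k = none → F z)
    {u v : Fin n → Bool} (huv : (cubeGraph n).Adj u v) (hu : inFace x u) (hv : inFace x v) :
    SpansFilledFace F [u, v, flipAt k u, flipAt k v] := by
  obtain ⟨e, he, huv_eq⟩ := cubeGraph_adj_iff.1 huv
  have hek : e ≠ k := by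
    rintro rfl
    exact he ((hu e b hxk).trans (hv e b hxk).symm)
  have hxe : x e = none := by
    cases hb : x e with
    | none => rfl
    | some b' => exact absurd ((hu e b' hb).trans (hv e b' hb).symm) he
  refine ⟨⟨sideFace k e u, card_sideFace hek.symm u⟩,
    hF _ (subFace_sideFace hck (hxc.1 e hxe) (inFace_of_subFace hxc hu)) (by simp [sideFace]),
    ?_⟩
  simp only [List.mem_cons, List.not_mem_nil, or_false]
  rintro t (rfl | rfl | rfl | rfl) <;> refine inFace_sideFace_iff.2 fun j hjk hje => ?_ <;>
    simp [flipAt_apply, hjk, huv_eq j hje]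

end faces

namespace EdgeEquiv

variable {n : ℕ} {G : SimpleGraph (Fin n → Bool)} {F : TwoFace n → Prop}

theorem append_left {u v w : Fin n → Bool} (p : G.Walk u v) {w₁ w₂ : G.Walk v w}
    (h : EdgeEquiv G F w₁ w₂) : EdgeEquiv G F (p.append w₁) (p.append w₂) := by
  induction h with
  | refl => exact refl _
  | symm _ ih => exact (ih p).symm
  | trans _ _ ih₁ ih₂ => exact (ih₁ p).trans (ih₂ p)
  | square z hz w₁ w₂ h₁ h₂ p' q =>
    simpa only [Walk.append_assoc] using square z hz w₁ w₂ h₁ h₂ (p.append p') q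
  | backtrack h p' q =>
    simpa only [Walk.append_assoc] using backtrack h (p.append p') q

theorem cons_of_spansFilledFace {u v u' v' w : Fin n → Bool} (h : G.Adj u v) (hu : G.Adj u u')
    (hv : G.Adj v v') (h' : G.Adj u' v') (hF : SpansFilledFace F [u, v, u', v'])
    (q : G.Walk v w) :
    EdgeEquiv G F (Walk.cons h q) (Walk.cons hu (Walk.cons h' (Walk.cons hv.symm q))) := by
  obtain ⟨z, hz, hzs⟩ := hF
  refine square z hz (Walk.cons h Walk.nil) (Walk.cons hu (Walk.cons h' (Walk.cons hv.symm
    Walk.nil))) (fun t ht => hzs t ?_) (fun t ht => hzs t ?_) Walk.nil q <;>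
    simp only [Walk.support_cons, Walk.support_nil, List.mem_cons, List.not_mem_nil] at ht ⊢ <;>
    tauto

/-- Homotopy across the prism `w × [0, 1]`: push `w` across its side squares one edge at a time,
cancelling each rung `v — φ v` against its reverse. -/
theorem conj_map_of_spansFilledFace (φ : G →g G) (rung : ∀ v, G.Adj v (φ v)) {u v : Fin n → Bool}
    (w : G.Walk u v) (hw : ∀ d ∈ w.darts, SpansFilledFace F [d.fst, d.snd, φ d.fst, φ d.snd]) :
    EdgeEquiv G F w
      (Walk.cons (rung u) ((w.map φ).append (Walk.cons (rung v).symm Walk.nil))) := by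
  induction w with
  | nil => exact (backtrack (rung _) Walk.nil Walk.nil).symm
  | cons h w ih =>
    rw [Walk.darts_cons, List.forall_mem_cons] at hw
    have across := cons_of_spansFilledFace h (rung _) (rung _) (φ.map_adj h) hw.1 w
    have inner := append_left
      (Walk.cons (rung _) (Walk.cons (φ.map_adj h) (Walk.cons (rung _).symm Walk.nil))) (ih hw.2)
    have cancel := backtrack (F := F) (rung _).symm
      (Walk.cons (rung _) (Walk.cons (φ.map_adj h) Walk.nil))
      ((w.map φ).append (Walk.cons (rung _).symm Walk.nil))
    exact across.trans (inner.trans cancel)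

end EdgeEquiv

theorem related_faces_homotopic_general (n : ℕ) (F : TwoFace n → Prop) (x y : TwoFace n)
    (hstar : ∀ i, x.1 i = none ↔ y.1 i = none)
    (hdist : (Finset.univ.filter fun i => x.1 i ≠ y.1 i).card = 1)
    (hrel : ∃ c : ThreeFace n, subFace x.1 c.1 ∧ subFace y.1 c.1 ∧
      ∀ z : TwoFace n, subFace z.1 c.1 → z ≠ x → z ≠ y → F z)
    (a : Fin n → Bool)
    (wx : (cubeGraph n).Walk a a)
    (hwx : wx.IsCycle ∧ wx.length = 4 ∧ ∀ z ∈ wx.support, inFace x.1 z) :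
    ∃ (b : Fin n → Bool) (hab : (cubeGraph n).Adj a b) (wy : (cubeGraph n).Walk b b),
      (wy.IsCycle ∧ wy.length = 4 ∧ ∀ z ∈ wy.support, inFace y.1 z) ∧
      EdgeEquiv (cubeGraph n) F wx
        (Walk.cons hab (wy.append (Walk.cons hab.symm Walk.nil))) := by
  obtain ⟨hcyc, hlen, hsupp⟩ := hwx
  obtain ⟨c, hxc, hyc, hF⟩ := hrel
  obtain ⟨k, hxyk, hxy⟩ := card_filter_ne_eq_one_iff.1 hdist
  obtain ⟨b, hxk, hyk⟩ := Option.exists_eq_some_not_of_ne hxyk (hstar k)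
  have hck : c.1 k = none := eq_none_of_subFace_of_ne hxc hyc hxyk
  have hfilled : ∀ z : TwoFace n, subFace z.1 c.1 → z.1 k = none → F z := fun z hzc hzk =>
    hF z hzc (by rintro rfl; simp [hzk] at hxk) (by rintro rfl; simp [hzk] at hyk)
  refine ⟨flipHom k a, cubeGraph_adj_flipAt k a, wx.map (flipHom k),
    ⟨hcyc.map (flipAt_involutive k).injective, by rw [Walk.length_map, hlen], ?_⟩,
    EdgeEquiv.conj_map_of_spansFilledFace (flipHom k) (cubeGraph_adj_flipAt k) wx
      fun d hd => spansFilledFace_flipAt hxk hxc hck hfilled d.adj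
        (hsupp _ (Walk.dart_fst_mem_support_of_mem_darts _ hd))
        (hsupp _ (Walk.dart_snd_mem_support_of_mem_darts _ hd))⟩
  rw [Walk.support_map]
  rintro _ hz
  obtain ⟨u, hu, rfl⟩ := List.mem_map.1 hz
  exact inFace_flipAt k hxk hyk hxy (hsupp u hu)

/-- If two parallel 2-faces `x` and `y` of a cubical complex (with full 1-skeleton and
filled faces `F`) are *related* — the unique 3-cube containing them has its other four
boundary 4-cycles all filled — then the boundary 4-cycle of `x` is edge-equivalent
(homotopic) to the boundary 4-cycle of `y` (conjugated by a connecting edge). -/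
theorem related_faces_homotopic (n : ℕ) (F : TwoFace n → Prop) (x y : TwoFace n)
    (hstar : ∀ i, x.1 i = none ↔ y.1 i = none)
    (hdist : (Finset.univ.filter fun i => x.1 i ≠ y.1 i).card = 1)
    (hrel : ∃ c : ThreeFace n, subFace x.1 c.1 ∧ subFace y.1 c.1 ∧
      ∀ z : TwoFace n, subFace z.1 c.1 → z ≠ x → z ≠ y → F z)
    (a : Fin n → Bool) (ha : inFace x.1 a)
    (wx : (cubeGraph n).Walk a a)
    (hwx : wx.IsCycle ∧ wx.length = 4 ∧ ∀ z ∈ wx.support, inFace x.1 z) :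
    ∃ (b : Fin n → Bool) (hab : (cubeGraph n).Adj a b) (wy : (cubeGraph n).Walk b b),
      (wy.IsCycle ∧ wy.length = 4 ∧ ∀ z ∈ wy.support, inFace y.1 z) ∧
      EdgeEquiv (cubeGraph n) F wx
        (Walk.cons hab (wy.append (Walk.cons hab.symm Walk.nil))) :=
  related_faces_homotopic_general n F x y hstar hdist hrel a wx hwx
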